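/- Let (𝒱, ℰ) be a tree-cover of a finite metric space (X,d) and let W be any minimum spanning tree of (X,d). Then for every A ∈ ℰ there exists a minimum spanning tree MST(A,d) of the submetric space (A,d) such that W is the union over A ∈ ℰ of these trees MST(A,d). Moreover, if for every A ∈ ℰ the minimum spanning tree of (A,d) is unique, then the minimum spanning tree of (X,d) is unique as well. -/

import Mathlib

open scoped Classical

noncomputable section

namespace Skel

/-- `m`-dimensional Euclidean space. -/
abbrev Euc (m : ℕ) : Type := EuclideanSpace ℝ (Fin m)

/-- Length (Euclidean distance between the two members) of an unordered pair of points. -/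
def sym2Dist {X : Type*} [PseudoMetricSpace X] : Sym2 X → ℝ :=
  Sym2.lift ⟨fun u v => dist u v, fun u v => dist_comm u v⟩

/-- Euclidean length of an edge under a vertex placement `pos`. -/
def edgeLen {V : Type*} {m : ℕ} (pos : V → Euc m) (e : Sym2 V) : ℝ :=
  sym2Dist (e.map pos)

/-- Straight-line segment realizing an unordered pair of vertices. -/
def edgeSeg {V : Type*} {m : ℕ} (pos : V → Euc m) : Sym2 V → Set (Euc m) :=
  Sym2.lift ⟨fun u v => segment ℝ (pos u) (pos v), fun u v => segment_symm ℝ (pos u) (pos v)⟩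

/-- Closed `ε`-offset of a set. -/
def offset {X : Type*} [PseudoMetricSpace X] (S : Set X) (ε : ℝ) : Set X :=
  {x | ∃ y ∈ S, dist x y ≤ ε}

/-- Geometric realization (union of straight-line edges) of a graph. -/
def shape {V : Type*} {m : ℕ} (G : SimpleGraph V) (pos : V → Euc m) : Set (Euc m) :=
  ⋃ e ∈ G.edgeSet, edgeSeg pos e

/-- Geometric realization of the portion of a graph inside a vertex subset `S`. -/
def shapeOn {V : Type*} {m : ℕ} (G : SimpleGraph V) (pos : V → Euc m) (S : Set V) :
    Set (Euc m) :=
  (pos '' S) ∪ ⋃ e ∈ {e ∈ G.edgeSet | ∀ x ∈ e, x ∈ S}, edgeSeg pos e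

/-- Total length of a walk in a geometric graph. -/
def walkCost {X : Type*} [PseudoMetricSpace X] {G : SimpleGraph X} {u v : X}
    (p : G.Walk u v) : ℝ :=
  (p.edges.map sym2Dist).sum

/-- Shortest-path metric of a geometric graph (edges weighted by Euclidean length). -/
def pathDist {X : Type*} [PseudoMetricSpace X] (G : SimpleGraph X) (u v : X) : ℝ :=
  sInf {c | ∃ p : G.Walk u v, walkCost p = c}

/-- Maximal edge length of a geometric graph. -/
def lmax {X : Type*} [PseudoMetricSpace X] (G : SimpleGraph X) : ℝ :=
  sSup (sym2Dist '' G.edgeSet)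

/-- Minimal distance between two sets. -/
def setDist {X : Type*} [PseudoMetricSpace X] (s t : Set X) : ℝ :=
  sInf {d | ∃ x ∈ s, ∃ y ∈ t, d = dist x y}

/-- Two edges (unordered pairs) are non-adjacent: distinct and sharing no vertex. -/
def nonAdjacent {V : Type*} (e h : Sym2 V) : Prop :=
  e ≠ h ∧ ∀ x, x ∈ e → x ∉ h

/-- The set of angles between pairs of (distinct) edges adjacent at a common vertex. -/
def angleSet {V : Type*} {m : ℕ} (T : SimpleGraph V) (pos : V → Euc m) : Set ℝ :=
  {θ | ∃ v a b : V, T.Adj v a ∧ T.Adj v b ∧ a ≠ b ∧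
    θ = EuclideanGeometry.angle (pos a) (pos v) (pos b)}

/-- Total edge cost of a graph, edges weighted by `d`. -/
def graphCost {X : Type*} (d : X → X → ℝ) (W : SimpleGraph X) : ℝ :=
  (∑ᶠ u, ∑ᶠ v, if W.Adj u v then d u v else 0) / 2

/-- A minimum spanning tree on the whole vertex type, edges weighted by `d`. -/
def IsMST {X : Type*} (d : X → X → ℝ) (W : SimpleGraph X) : Prop :=
  W.IsTree ∧ ∀ W' : SimpleGraph X, W'.IsTree → graphCost d W ≤ graphCost d W'

/-- A graph on an ambient type whose edges lie in `S` and which spans `S` as a tree. -/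
def IsSpanningTreeOn {X : Type*} (S : Set X) (W : SimpleGraph X) : Prop :=
  (∀ a b, W.Adj a b → a ∈ S ∧ b ∈ S) ∧ (W.induce S).IsTree

/-- A minimum spanning tree of the metric subspace `(S, d)`, realized on the ambient type. -/
def IsMSTOn {X : Type*} (d : X → X → ℝ) (S : Set X) (W : SimpleGraph X) : Prop :=
  IsSpanningTreeOn S W ∧
    ∀ W' : SimpleGraph X, IsSpanningTreeOn S W' → graphCost d W ≤ graphCost d W'

/-- Graph-cover `(𝒱, ℰ)` of the space `X`. -/
def IsGraphCover {X : Type*} (V : Set X) (E : Set (Set X)) : Prop :=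
  V.Finite ∧ E.Finite ∧ ⋃₀ E = Set.univ ∧
    (∀ A ∈ E, ∀ B ∈ E, A ≠ B → (A ∩ B).Subsingleton ∧ A ∩ B ⊆ V) ∧
    (∀ A ∈ E, ∃ u v : X, u ≠ v ∧ V ∩ A = {u, v})

/-- Underlying simple graph of the nerve of a cover. -/
def nerve {X : Type*} (V : Set X) (E : Set (Set X)) : SimpleGraph V where
  Adj u v := u ≠ v ∧ ∃ A ∈ E, (u : X) ∈ A ∧ (v : X) ∈ A
  symm := by
    constructor
    rintro u v ⟨h, A, hA, hu, hv⟩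
    exact ⟨Ne.symm h, A, hA, hv, hu⟩
  loopless := by
    constructor
    rintro u ⟨h, -⟩
    exact h rfl

/-- The nerve, as a multigraph with one edge per cover set, is a tree:
its underlying simple graph is a tree and there are no parallel edges. -/
def NerveIsTree {X : Type*} (V : Set X) (E : Set (Set X)) : Prop :=
  (nerve V E).IsTree ∧
    ∀ A ∈ E, ∀ B ∈ E, ∀ u v : X, u ≠ v → u ∈ V → v ∈ V →
      u ∈ A → v ∈ A → u ∈ B → v ∈ B → A = B

/-- Tree-cover of a space with distance function `d`. -/
def IsTreeCover {X : Type*} (d : X → X → ℝ) (V : Set X) (E : Set (Set X)) : Prop :=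
  IsGraphCover V E ∧ NerveIsTree V E ∧
    ∀ u v : X, u ≠ v → (¬ ∃ A ∈ E, u ∈ A ∧ v ∈ A) →
      ∃ t : X, max (d u t) (d v t) < d u v

/-- Standing hypotheses: `T` is a straight-line tree realized by `pos` in `ℝ^m`,
`C` is an `ε`-sample of `T`, `G` is a connected graph with vertex set `C` which is a
`γ`-approximation of `(T, C)`, `D ⊆ C` is `δ`-sparse in the path metric of `G`,
every vertex of `T` lies within `ε` of `D`, `θT` is the minimal angle between adjacent
edges of `T`, and `δ` satisfies the key inequality. -/
structure Standing {V : Type*} {m : ℕ} (T : SimpleGraph V) (pos : V → Euc m)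
    (C D : Set (Euc m)) (G : SimpleGraph (Euc m)) (γ ε δ θT : ℝ) : Prop where
  tree : T.IsTree
  pos_inj : Function.Injective pos
  eps_pos : 0 < ε
  gamma_ge : 1 ≤ γ
  C_fin : C.Finite
  sample : ∀ p ∈ C, ∃ q ∈ shape T pos, dist p q ≤ ε
  G_support : ∀ a b, G.Adj a b → a ∈ C ∧ b ∈ C
  G_conn : ∀ a ∈ C, ∀ b ∈ C, G.Reachable a b
  approx1 : ∀ e ∈ T.edgeSet, ∀ a ∈ C, ∀ b ∈ C,
      a ∈ offset (edgeSeg pos e) ε → b ∈ offset (edgeSeg pos e) ε →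
      pathDist G a b ≤ γ * dist a b
  approx2 : ∀ e ∈ T.edgeSet, ∀ h ∈ T.edgeSet, nonAdjacent e h →
      lmax G + 2 * ε < setDist (edgeSeg pos e) (edgeSeg pos h)
  D_sub : D ⊆ C
  sparse : ∀ a ∈ D, ∀ b ∈ D, a ≠ b → δ ≤ pathDist G a b
  vert_close : ∀ v : V, ∃ p ∈ D, dist (pos v) p ≤ ε
  theta_least : IsLeast (angleSet T pos) θT
  delta_ge : 2 * γ * (ε + ε / Real.sin (θT / 2)
      + lmax G / Real.sin (min θT (Real.pi / 2))) ≤ δ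

end Skel

open Skel

/-!
An edge `uv` of a minimum spanning tree `W` satisfies `d u v ≤ max (d u t) (d v t)` for every
`t`: deleting `uv` splits `W` into the side of `u` and the side of `v`, and if `t` lies on the
side of `u` (say) then replacing `uv` by `tv` gives another spanning tree. By the tree-cover
axiom every edge of `W` therefore lies in a cover set.

Fix `A ∈ ℰ`. A walk in `W` leaving `A` moves through cover sets other than `A`, consecutive ones
meeting in points of `𝒱`, so it induces a walk in the nerve avoiding the edge given by `A`.
Since the nerve is a tree and has no parallel edges, such a walk cannot join two distinct points
of `A`. Hence the edges of `W` inside `A` already connect `A`: they form a spanning tree of `A`,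
and exchanging them for any other spanning tree of `A` yields a spanning tree of `X`, so they
form a minimum one. Finally `W` is the union of these pieces, and if each piece is forced then
so is `W`.
-/

namespace SimpleGraph

variable {V : Type*} {G H : SimpleGraph V} {u v w : V}

theorem Reachable.of_forall_adj_imp {P : V → Prop} (hP : ∀ x y, G.Adj x y → P x → P y)
    (h : G.Reachable u v) (hu : P u) : P v := by
  obtain ⟨p⟩ := h
  induction p with
  | nil => exact hu
  | cons hadj _ ih => exact ih (hP _ _ hadj hu)

theorem Reachable.of_forall_adj_reachable (hGH : ∀ x y, G.Adj x y → H.Reachable x y)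
    (h : G.Reachable u v) : H.Reachable u v :=
  h.of_forall_adj_imp (fun _ _ hxy hx => hx.trans (hGH _ _ hxy)) (Reachable.refl u)

theorem Reachable.induce_of_forall_adj_mem {s : Set V} (hs : ∀ x y, G.Adj x y → y ∈ s)
    (h : G.Reachable u v) (hu : u ∈ s) :
    ∃ hv : v ∈ s, (G.induce s).Reachable ⟨u, hu⟩ ⟨v, hv⟩ :=
  h.of_forall_adj_imp (P := fun x => ∃ hx : x ∈ s, (G.induce s).Reachable ⟨u, hu⟩ ⟨x, hx⟩)
    (fun x y hxy ⟨hx, hr⟩ => ⟨hs x y hxy,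
      hr.trans (induce_adj.2 hxy : (G.induce s).Adj ⟨x, hx⟩ ⟨y, hs x y hxy⟩).reachable⟩)
    ⟨hu, Reachable.refl _⟩

theorem Reachable.deleteEdges_or (h : G.Reachable w u) (v : V) :
    (G.deleteEdges {s(u, v)}).Reachable w u ∨ (G.deleteEdges {s(u, v)}).Reachable w v := by
  refine h.symm.of_forall_adj_imp
    (P := fun x =>
      (G.deleteEdges {s(u, v)}).Reachable x u ∨ (G.deleteEdges {s(u, v)}).Reachable x v)
    (fun x y hxy hx => ?_) (Or.inl (Reachable.refl u))
  by_cases he : s(x, y) = s(u, v)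
  · rcases Sym2.eq_iff.1 he with ⟨-, rfl⟩ | ⟨-, rfl⟩
    exacts [Or.inr (Reachable.refl _), Or.inl (Reachable.refl _)]
  · have hyx : (G.deleteEdges {s(u, v)}).Adj y x :=
      deleteEdges_adj.2 ⟨hxy.symm, by rwa [Set.mem_singleton_iff, Sym2.eq_swap]⟩
    exact hx.imp hyx.reachable.trans hyx.reachable.trans

theorem IsAcyclic.not_reachable_deleteEdges (hG : G.IsAcyclic) (huv : G.Adj u v) :
    ¬ (G.deleteEdges {s(u, v)}).Reachable u v :=
  isBridge_iff.1 (isAcyclic_iff_forall_adj_isBridge.1 hG huv)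

theorem IsTree.deleteEdges_sup_edge (hG : G.IsTree) (huv : G.Adj u v)
    (hw : (G.deleteEdges {s(u, v)}).Reachable w u) :
    (G.deleteEdges {s(u, v)} ⊔ edge w v).IsTree := by
  set G₀ := G.deleteEdges {s(u, v)}
  have hbridge := hG.isAcyclic.not_reachable_deleteEdges huv
  have hwv : w ≠ v := by
    rintro rfl
    exact hbridge hw.symm
  refine ⟨?_, (hG.isAcyclic.anti (deleteEdges_le _)).sup_edge_of_not_reachable
    fun h => hbridge (hw.symm.trans h)⟩
  have huv' : (G₀ ⊔ edge w v).Reachable u v :=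
    (hw.symm.mono le_sup_left).trans (Adj.reachable (Or.inr ((edge_adj ..).2 ⟨by simp, hwv⟩)))
  have : Nonempty V := ⟨u⟩
  refine ⟨fun x y => (hG.connected.preconnected x y).of_forall_adj_reachable fun a b hab => ?_⟩
  by_cases he : s(a, b) = s(u, v)
  · rcases Sym2.eq_iff.1 he with ⟨rfl, rfl⟩ | ⟨rfl, rfl⟩
    exacts [huv', huv'.symm]
  · exact Adj.reachable (Or.inl (deleteEdges_adj.2 ⟨hab, he⟩))

theorem card_edgeSet_sup [Finite V] (h : Disjoint G H) :
    Nat.card (G ⊔ H).edgeSet = Nat.card G.edgeSet + Nat.card H.edgeSet := by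
  simp only [edgeSet_sup, Nat.card_coe_set_eq]
  exact Set.ncard_union_eq (disjoint_edgeSet.2 h)

def restrict (G : SimpleGraph V) (s : Set V) : SimpleGraph V where
  Adj a b := G.Adj a b ∧ a ∈ s ∧ b ∈ s
  symm := ⟨fun _ _ h => ⟨h.1.symm, h.2.2, h.2.1⟩⟩
  loopless := ⟨fun _ h => h.1.ne rfl⟩

theorem restrict_le (G : SimpleGraph V) (s : Set V) : G.restrict s ≤ G := fun _ _ h => h.1

end SimpleGraph

namespace Skel

open SimpleGraph

variable {X : Type*}

section Cost

variable [Finite X] (d : X → X → ℝ)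

theorem graphCost_sup {G H : SimpleGraph X} (h : Disjoint G H) :
    graphCost d (G ⊔ H) = graphCost d G + graphCost d H := by
  have := Fintype.ofFinite X
  simp only [graphCost, finsum_eq_sum_of_fintype, sup_adj, ← add_div, ← Finset.sum_add_distrib]
  congr 1
  refine Finset.sum_congr rfl fun u _ => Finset.sum_congr rfl fun v _ => ?_
  have := disjoint_left.1 h u v
  split_ifs <;> simp_all

variable {d}

theorem graphCost_edge (hd : ∀ u v, d u v = d v u) {u v : X} (huv : u ≠ v) :
    graphCost d (edge u v) = d u v := by
  have := Fintype.ofFinite X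
  calc graphCost d (edge u v)
      = (∑ a, ∑ b, ((if a = u ∧ b = v then d u v else 0)
          + (if a = v ∧ b = u then d u v else 0))) / 2 := by
        simp only [graphCost, finsum_eq_sum_of_fintype]
        congr 1
        refine Finset.sum_congr rfl fun a _ => Finset.sum_congr rfl fun b _ => ?_
        split_ifs <;> simp_all [edge_adj]
    _ = d u v := by simp [Finset.sum_add_distrib, ite_and]

end Cost

section MST

variable [Finite X] {d : X → X → ℝ} {W : SimpleGraph X} {A : Set X} {u v : X}

theorem IsMST.le_of_reachable_deleteEdges (hd : ∀ x y, d x y = d y x) (hW : IsMST d W)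
    (huv : W.Adj u v) {t : X} (ht : (W.deleteEdges {s(u, v)}).Reachable t u) :
    d u v ≤ d t v := by
  set W₀ := W.deleteEdges {s(u, v)}
  have hbridge := hW.1.isAcyclic.not_reachable_deleteEdges huv
  have htv : t ≠ v := by
    rintro rfl
    exact hbridge ht.symm
  have hcost : graphCost d W = graphCost d W₀ + d u v := by
    rw [← graphCost_edge hd huv.ne, show W₀ = W \ edge u v from rfl,
      ← graphCost_sup d disjoint_sdiff_self_left, sdiff_sup_cancel ((edge_le_iff _).2 (Or.inr huv))]
  have hdisj : Disjoint W₀ (edge t v) :=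
    (disjoint_edge _).2 fun h => hbridge (ht.symm.trans h.reachable)
  have := hW.2 _ (hW.1.deleteEdges_sup_edge huv ht)
  rw [graphCost_sup d hdisj, graphCost_edge hd htv, hcost] at this
  linarith

theorem IsMST.le_max_of_adj (hd : ∀ x y, d x y = d y x) (hW : IsMST d W) (huv : W.Adj u v)
    (t : X) : d u v ≤ max (d u t) (d v t) := by
  rcases (hW.1.connected.preconnected t u).deleteEdges_or v with h | h
  · exact (hW.le_of_reachable_deleteEdges hd huv h).trans (hd t v ▸ le_max_right _ _)
  · rw [Sym2.eq_swap] at h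
    have := hW.le_of_reachable_deleteEdges hd huv.symm h
    rw [hd v u, hd t u] at this
    exact this.trans (le_max_left _ _)

theorem IsSpanningTreeOn.card_edgeSet (h : IsSpanningTreeOn A W) :
    Nat.card W.edgeSet + 1 = Nat.card A := by
  have := Fintype.ofFinite X
  rw [← (isTree_iff_connected_and_card.1 h.2).2]
  have := card_edgeFinset_induce_of_support_subset (G := W) (s := A)
    fun x ⟨y, hxy⟩ => (h.1 x y hxy).1
  simp only [edgeFinset_card] at this
  simp only [Nat.card_eq_fintype_card, this]

theorem IsMST.isMSTOn_restrict (hW : IsMST d W) (hA : IsSpanningTreeOn A (W.restrict A)) :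
    IsMSTOn d A (W.restrict A) := by
  refine ⟨hA, fun T hT => ?_⟩
  set R := W.restrict A
  have hOT : Disjoint (W \ R) T := disjoint_left.2 fun x y hxy hT' => hxy.2 ⟨hxy.1, hT.1 x y hT'⟩
  have hOR : Disjoint (W \ R) R := disjoint_sdiff_self_left
  have hWsplit : W \ R ⊔ R = W := sdiff_sup_cancel (W.restrict_le A)
  have htree : (W \ R ⊔ T).IsTree := by
    have hWcard := (isTree_iff_connected_and_card.1 hW.1).2
    rw [← hWsplit, card_edgeSet_sup hOR] at hWcard
    have hcard := hT.card_edgeSet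
    rw [← hA.card_edgeSet] at hcard
    have : Nonempty X := hW.1.connected.nonempty
    refine isTree_iff_connected_and_card.2 ⟨⟨fun x y => ?_⟩, by rw [card_edgeSet_sup hOT]; omega⟩
    refine (hW.1.connected.preconnected x y).of_forall_adj_reachable fun a b hab => ?_
    by_cases habA : a ∈ A ∧ b ∈ A
    · exact ((hT.2.connected.preconnected ⟨a, habA.1⟩ ⟨b, habA.2⟩).map
        (Embedding.induce A).toHom).mono le_sup_right
    · exact Adj.reachable (Or.inl ⟨hab, fun h => habA h.2⟩)
  have hcost := graphCost_sup d hOR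
  rw [hWsplit] at hcost
  have := hW.2 _ htree
  rw [graphCost_sup d hOT] at this
  linarith

end MST

section Nerve

variable {Vc : Set X} {Ec : Set (Set X)} {A : Set X}

theorem NerveIsTree.reachable_deleteEdges_of_mem (hN : NerveIsTree Vc Ec) (hA : A ∈ Ec)
    {B : Set X} (hB : B ∈ Ec) (hBA : B ≠ A) {a b w w' : Vc} (ha : ↑a ∈ A) (hb : ↑b ∈ A)
    (hw : ↑w ∈ B) (hw' : ↑w' ∈ B) : ((nerve Vc Ec).deleteEdges {s(a, b)}).Reachable w w' := by
  rcases eq_or_ne w w' with rfl | hne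
  · rfl
  refine Adj.reachable (deleteEdges_adj.2 ⟨⟨hne, B, hB, hw, hw'⟩, fun he => hBA ?_⟩)
  have hne' : (w : X) ≠ w' := Subtype.coe_ne_coe.2 hne
  rcases Sym2.eq_iff.1 he with ⟨rfl, rfl⟩ | ⟨rfl, rfl⟩
  · exact hN.2 B hB A hA w w' hne' w.2 w'.2 hw hw' ha hb
  · exact hN.2 B hB A hA w w' hne' w.2 w'.2 hw hw' hb ha

theorem NerveIsTree.eq_of_reachable (hN : NerveIsTree Vc Ec)
    (hVc : ∀ A ∈ Ec, ∀ B ∈ Ec, A ≠ B → A ∩ B ⊆ Vc) (hA : A ∈ Ec) {G : SimpleGraph X}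
    (hG : ∀ x y, G.Adj x y → ∃ B ∈ Ec, B ≠ A ∧ x ∈ B ∧ y ∈ B) ⦃a b : X⦄ (ha : a ∈ A)
    (hb : b ∈ A) (hab : G.Reachable a b) : a = b := by
  by_contra hne
  have hmem : ∀ {x y}, x ∈ A → G.Reachable x y → x ≠ y → x ∈ Vc := by
    rintro x y hx ⟨p⟩ hxy
    obtain ⟨z, hxz, -, -⟩ := Walk.exists_eq_cons_of_ne hxy p
    obtain ⟨B, hB, hBA, hxB, -⟩ := hG x z hxz
    exact hVc A hA B hB hBA.symm ⟨hx, hxB⟩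
  set a' : Vc := ⟨a, hmem ha hab hne⟩
  set b' : Vc := ⟨b, hmem hb hab.symm (Ne.symm hne)⟩
  set N₀ := (nerve Vc Ec).deleteEdges {s(a', b')}
  have hlink : ∀ B ∈ Ec, B ≠ A → ∀ w w' : Vc, ↑w ∈ B → ↑w' ∈ B → N₀.Reachable w w' :=
    fun B hB hBA w w' => hN.reachable_deleteEdges_of_mem hA hB hBA (a := a') (b := b') ha hb
  -- invariant along `G`: every point of `Vc` sharing with `x` a cover set other than `A`
  -- is reachable from `a` in the nerve without its `A`-edge
  let P : X → Prop := fun x =>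
    ∀ w : Vc, (↑w = x ∨ ∃ B ∈ Ec, B ≠ A ∧ x ∈ B ∧ ↑w ∈ B) → N₀.Reachable a' w
  have hPa : P a := by
    rintro w (hw | ⟨B, hB, hBA, haB, hwB⟩)
    · rw [show w = a' from Subtype.ext hw]
    · exact hlink B hB hBA a' w haB hwB
  have hPstep : ∀ x y, G.Adj x y → P x → P y := by
    intro x y hxy hx w hw
    obtain ⟨C, hC, hCA, hxC, hyC⟩ := hG x y hxy
    rcases hw with hw | ⟨B, hB, hBA, hyB, hwB⟩
    · exact hx w (Or.inr ⟨C, hC, hCA, hxC, hw ▸ hyC⟩)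
    rcases eq_or_ne B C with rfl | hBC
    · exact hx w (Or.inr ⟨B, hB, hBA, hxC, hwB⟩)
    let y' : Vc := ⟨y, hVc B hB C hC hBC ⟨hyB, hyC⟩⟩
    exact (hx y' (Or.inr ⟨C, hC, hCA, hxC, hyC⟩)).trans (hlink B hB hBA y' w hyB hwB)
  exact (hN.1.isAcyclic.not_reachable_deleteEdges ⟨fun h => hne (congrArg Subtype.val h), A,
    hA, ha, hb⟩) (hab.of_forall_adj_imp hPstep hPa b' (Or.inl rfl))

end Nerve

section TreeCover

variable [Finite X] {d : X → X → ℝ} {Vc : Set X} {Ec : Set (Set X)} {W : SimpleGraph X}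

theorem IsTreeCover.exists_mem_of_adj (hcov : IsTreeCover d Vc Ec) (hd : ∀ x y, d x y = d y x)
    (hW : IsMST d W) {u v : X} (huv : W.Adj u v) : ∃ A ∈ Ec, u ∈ A ∧ v ∈ A := by
  by_contra h
  obtain ⟨t, ht⟩ := hcov.2.2 u v huv.ne h
  exact (hW.le_max_of_adj hd huv t).not_gt ht

theorem IsTreeCover.isSpanningTreeOn_restrict (hcov : IsTreeCover d Vc Ec)
    (hd : ∀ x y, d x y = d y x) (hW : IsMST d W) {A : Set X} (hA : A ∈ Ec) :
    IsSpanningTreeOn A (W.restrict A) := by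
  refine ⟨fun _ _ h => h.2, ?_, (hW.1.isAcyclic.anti (W.restrict_le A)).induce A⟩
  have hout : ∀ x y, (W \ W.restrict A).Adj x y → ∃ B ∈ Ec, B ≠ A ∧ x ∈ B ∧ y ∈ B := by
    intro x y hxy
    obtain ⟨B, hB, hxB, hyB⟩ := hcov.exists_mem_of_adj hd hW hxy.1
    exact ⟨B, hB, by rintro rfl; exact hxy.2 ⟨hxy.1, hxB, hyB⟩, hxB, hyB⟩
  have hgate := hcov.2.1.eq_of_reachable (fun A hA B hB h => (hcov.1.2.2.2.1 A hA B hB h).2)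
    hA hout
  obtain ⟨u, _, -, huA⟩ := hcov.1.2.2.2.2 A hA
  have : Nonempty A := ⟨⟨u, (huA ▸ Set.mem_insert u _ : u ∈ Vc ∩ A).2⟩⟩
  refine ⟨fun ⟨a, ha⟩ ⟨b, hb⟩ => ?_⟩
  -- invariant along a `W`-walk from `a`: a walk inside `A`, then an excursion avoiding `A`-edges
  let P : X → Prop := fun x =>
    ∃ c ∈ A, (W.restrict A).Reachable a c ∧ (W \ W.restrict A).Reachable c x
  have hstep : ∀ x y, W.Adj x y → P x → P y := by
    rintro x y hxy ⟨c, hc, hac, hcx⟩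
    by_cases hxyA : x ∈ A ∧ y ∈ A
    · obtain rfl := hgate hc hxyA.1 hcx
      exact ⟨y, hxyA.2, hac.trans (Adj.reachable ⟨hxy, hxyA⟩), Reachable.refl y⟩
    · exact ⟨c, hc, hac, hcx.trans (Adj.reachable ⟨hxy, fun h => hxyA h.2⟩)⟩
  obtain ⟨c, hc, hac, hcb⟩ := (hW.1.connected.preconnected a b).of_forall_adj_imp hstep
    ⟨a, ha, Reachable.refl a, Reachable.refl a⟩
  obtain rfl := hgate hc hb hcb
  exact (hac.induce_of_forall_adj_mem (fun _ _ (h : (W.restrict A).Adj _ _) => h.2.2) ha).2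

theorem IsTreeCover.eq_iSup_restrict (hcov : IsTreeCover d Vc Ec) (hd : ∀ x y, d x y = d y x)
    (hW : IsMST d W) : W = ⨆ A ∈ Ec, W.restrict A := by
  refine le_antisymm (fun x y hxy => ?_) (iSup₂_le fun A _ => W.restrict_le A)
  obtain ⟨A, hA, hxA, hyA⟩ := hcov.exists_mem_of_adj hd hW hxy
  simp only [iSup_adj]
  exact ⟨A, hA, hxy, hxA, hyA⟩

end TreeCover

end Skel

/-- Minimum spanning tree gluing lemma: any MST of a finite metric space with a tree-cover
decomposes as a union of MSTs of the cover sets; if each of those is unique, so is the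
global MST. -/
theorem statement6 {X : Type*} [MetricSpace X] [Finite X]
    (Vc : Set X) (Ec : Set (Set X))
    (hcov : IsTreeCover (fun a b => dist a b) Vc Ec)
    (W : SimpleGraph X) (hW : IsMST (fun a b => dist a b) W) :
    (∃ M : Set X → SimpleGraph X,
        (∀ A ∈ Ec, IsMSTOn (fun a b => dist a b) A (M A)) ∧ W = ⨆ A ∈ Ec, M A) ∧
      ((∀ A ∈ Ec, ∃! WA : SimpleGraph X, IsMSTOn (fun a b => dist a b) A WA) →
        ∃! W' : SimpleGraph X, IsMST (fun a b => dist a b) W') := by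
  have hd : ∀ x y : X, dist x y = dist y x := dist_comm
  have hpieces : ∀ W', IsMST (fun a b => dist a b) W' →
      ∀ A ∈ Ec, IsMSTOn (fun a b => dist a b) A (W'.restrict A) :=
    fun W' hW' A hA => hW'.isMSTOn_restrict (hcov.isSpanningTreeOn_restrict hd hW' hA)
  refine ⟨⟨W.restrict, hpieces W hW, hcov.eq_iSup_restrict hd hW⟩,
    fun huniq => ⟨W, hW, fun W' hW' => ?_⟩⟩
  rw [hcov.eq_iSup_restrict hd hW', hcov.eq_iSup_restrict hd hW]
  exact iSup_congr fun A => iSup_congr fun hA =>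
    (huniq A hA).unique (hpieces W' hW' A hA) (hpieces W hW A hA)
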